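/- Suppose the eleven known blocks a, b, c, d, e, f, g, h, i, j, k are invertible, the outer matrix [[a, b], [d, e]] is invertible, and A·B = I and B·A = I. Then z = q̃ · (d·a⁻¹ − e·b⁻¹)⁻¹. -/

import Mathlib

open Matrix

/-- The 3×3 block matrix `[[m11, m12, m13], [m21, m22, m23], [m31, m32, m33]]`
assembled from n×n blocks. -/
def blk3 {F : Type*} [Field F] {n : ℕ}
    (m11 m12 m13 m21 m22 m23 m31 m32 m33 : Matrix (Fin n) (Fin n) F) :
    Matrix (Fin n ⊕ (Fin n ⊕ Fin n)) (Fin n ⊕ (Fin n ⊕ Fin n)) F :=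
  Matrix.fromBlocks m11 (Matrix.fromCols m12 m13) (Matrix.fromRows m21 m31)
    (Matrix.fromBlocks m22 m23 m32 m33)

/-- `p̃ = −a⁻¹h⁻¹i + a⁻¹bjh⁻¹i − d⁻¹ − d⁻¹ejh⁻¹`. -/
noncomputable def pTilde {F : Type*} [Field F] {n : ℕ}
    (a b d e h i j : Matrix (Fin n) (Fin n) F) : Matrix (Fin n) (Fin n) F :=
  -(a⁻¹ * h⁻¹ * i) + a⁻¹ * b * j * h⁻¹ * i - d⁻¹ - d⁻¹ * e * j * h⁻¹

/-- `q̃ = −kf⁻¹a⁻¹ + kf⁻¹gda⁻¹ − b⁻¹ − kf⁻¹geb⁻¹`. -/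
noncomputable def qTilde {F : Type*} [Field F] {n : ℕ}
    (a b d e f g k : Matrix (Fin n) (Fin n) F) : Matrix (Fin n) (Fin n) F :=
  -(k * f⁻¹ * a⁻¹) + k * f⁻¹ * g * d * a⁻¹ - b⁻¹ - k * f⁻¹ * g * e * b⁻¹

/-!
The (1,1) and (1,3) blocks of `B * A = 1` determine `u` and `v` through `f⁻¹`; substituting them
into the (3,1) and (3,3) blocks gives `z * (d * a⁻¹ - e * b⁻¹) = q̃`. The factor
`d * a⁻¹ - e * b⁻¹ = -((e - d * a⁻¹ * b) * b⁻¹)` is invertible because `e - d * a⁻¹ * b` is the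
Schur complement of `a` in the outer matrix.
-/

lemma Matrix.isUnit_mul_inv_sub_mul_inv {m R : Type*} [Fintype m] [DecidableEq m] [CommRing R]
    {a b d e : Matrix m m R} (ha : IsUnit a) (hb : IsUnit b)
    (houter : IsUnit (fromBlocks a b d e)) : IsUnit (d * a⁻¹ - e * b⁻¹) := by
  let := ha.invertible
  let := hb.invertible
  have hschur : IsUnit (e - d * a⁻¹ * b) := by
    simpa only [invOf_eq_nonsing_inv] using isUnit_fromBlocks_iff_of_invertible₁₁.mp houter
  have hfactor : d * a⁻¹ - e * b⁻¹ = -((e - d * a⁻¹ * b) * b⁻¹) := by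
    rw [sub_mul, Matrix.mul_assoc _ b, mul_inv_of_invertible, mul_one, neg_sub]
  rw [hfactor]
  exact (hschur.mul (isUnit_nonsing_inv_iff.mpr hb)).neg

section BlockThree

variable {F : Type*} [Field F] {n : ℕ}

lemma blk3_inj {m11 m12 m13 m21 m22 m23 m31 m32 m33 p11 p12 p13 p21 p22 p23 p31 p32 p33 :
      Matrix (Fin n) (Fin n) F} :
    blk3 m11 m12 m13 m21 m22 m23 m31 m32 m33 = blk3 p11 p12 p13 p21 p22 p23 p31 p32 p33 ↔
      m11 = p11 ∧ m12 = p12 ∧ m13 = p13 ∧ m21 = p21 ∧ m22 = p22 ∧ m23 = p23 ∧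
        m31 = p31 ∧ m32 = p32 ∧ m33 = p33 := by
  simp only [blk3, fromBlocks_inj, fromCols_ext_iff, fromRows_ext_iff]
  tauto

lemma blk3_one : blk3 (1 : Matrix (Fin n) (Fin n) F) 0 0 0 1 0 0 0 1 = 1 := by
  rw [blk3, fromCols_zero, fromRows_zero, fromBlocks_one, fromBlocks_one]

lemma blk3_mul_blk3 (m11 m12 m13 m21 m22 m23 m31 m32 m33 p11 p12 p13 p21 p22 p23 p31 p32 p33 :
      Matrix (Fin n) (Fin n) F) :
    blk3 m11 m12 m13 m21 m22 m23 m31 m32 m33 * blk3 p11 p12 p13 p21 p22 p23 p31 p32 p33 =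
      blk3 (m11 * p11 + m12 * p21 + m13 * p31) (m11 * p12 + m12 * p22 + m13 * p32)
        (m11 * p13 + m12 * p23 + m13 * p33) (m21 * p11 + m22 * p21 + m23 * p31)
        (m21 * p12 + m22 * p22 + m23 * p32) (m21 * p13 + m22 * p23 + m23 * p33)
        (m31 * p11 + m32 * p21 + m33 * p31) (m31 * p12 + m32 * p22 + m33 * p32)
        (m31 * p13 + m32 * p23 + m33 * p33) := by
  ext (r | r | r) (s | s | s) <;>
    simp [blk3, mul_apply, Fintype.sum_sum_type, add_assoc]

lemma mul_mul_inv_sub_mul_inv_eq_qTilde {a b d e f g j k u v x z : Matrix (Fin n) (Fin n) F}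
    (ha : IsUnit a) (hb : IsUnit b) (hf : IsUnit f)
    (h11 : x * a + f * u + g * d = 1) (h13 : x * b + f * v + g * e = 0)
    (h31 : j * a + k * u + z * d = 0) (h33 : j * b + k * v + z * e = 1) :
    z * (d * a⁻¹ - e * b⁻¹) = qTilde a b d e f g k := by
  have haa : a * a⁻¹ = 1 := mul_nonsing_inv a ((isUnit_iff_isUnit_det a).mp ha)
  have hbb : b * b⁻¹ = 1 := mul_nonsing_inv b ((isUnit_iff_isUnit_det b).mp hb)
  have hff : f⁻¹ * f = 1 := nonsing_inv_mul f ((isUnit_iff_isUnit_det f).mp hf)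
  have hfu : f * u = 1 - x * a - g * d := by rw [← h11]; abel
  have hfv : f * v = -(x * b) - g * e := by rw [← sub_eq_zero, ← h13]; abel
  have hu : u = f⁻¹ * (1 - x * a - g * d) := by rw [← hfu, ← Matrix.mul_assoc, hff, one_mul]
  have hv : v = f⁻¹ * (-(x * b) - g * e) := by rw [← hfv, ← Matrix.mul_assoc, hff, one_mul]
  have hzd : z * d = -(j * a + k * u) := eq_neg_of_add_eq_zero_right h31
  have hze : z * e = 1 - (j * b + k * v) := eq_sub_of_add_eq' h33
  rw [qTilde, mul_sub, ← Matrix.mul_assoc, ← Matrix.mul_assoc, hzd, hze, hu, hv]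
  simp only [sub_mul, add_mul, neg_mul, mul_sub, mul_neg, mul_one, one_mul,
    Matrix.mul_assoc, haa, hbb]
  abel

end BlockThree

theorem stmt_13_general {F : Type*} [Field F] {n : ℕ}
    (a b c d e f g h i j k : Matrix (Fin n) (Fin n) F)
    (ha : IsUnit a) (hb : IsUnit b)
    (hf : IsUnit f)
    (t u v w x y z : Matrix (Fin n) (Fin n) F)
    (houter : IsUnit (Matrix.fromBlocks a b d e))
    (hBA : blk3 x f g h y i j k z * blk3 a t b u c v d w e = 1) :
    z = qTilde a b d e f g k * (d * a⁻¹ - e * b⁻¹)⁻¹ := by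
  rw [blk3_mul_blk3, ← blk3_one, blk3_inj] at hBA
  obtain ⟨h11, -, h13, -, -, -, h31, -, h33⟩ := hBA
  have hS := isUnit_mul_inv_sub_mul_inv ha hb houter
  rw [← mul_mul_inv_sub_mul_inv_eq_qTilde ha hb hf h11 h13 h31 h33,
    mul_nonsing_inv_cancel_right _ _ ((isUnit_iff_isUnit_det _).mp hS)]

theorem stmt_13 {F : Type*} [Field F] {n : ℕ} (hn : 0 < n)
    (a b c d e f g h i j k : Matrix (Fin n) (Fin n) F)
    (ha : IsUnit a) (hb : IsUnit b) (hc : IsUnit c) (hd : IsUnit d) (he : IsUnit e)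
    (hf : IsUnit f) (hg : IsUnit g) (hh : IsUnit h) (hi : IsUnit i) (hj : IsUnit j)
    (hk : IsUnit k)
    (t u v w x y z : Matrix (Fin n) (Fin n) F)
    (houter : IsUnit (Matrix.fromBlocks a b d e))
    (hAB : blk3 a t b u c v d w e * blk3 x f g h y i j k z = 1)
    (hBA : blk3 x f g h y i j k z * blk3 a t b u c v d w e = 1) :
    z = qTilde a b d e f g k * (d * a⁻¹ - e * b⁻¹)⁻¹ :=
  stmt_13_general a b c d e f g h i j k ha hb hf t u v w x y z houter hBA
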